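/- arXiv:1910.08793 — 3 statements merged into one kernel-verified Lean document; each statement's English description precedes it below -/
import Mathlib

section
/- If L is a 2-entangled uncountable linear order, then L has the countable chain condition (there is no uncountable family of pairwise disjoint nonempty open intervals). -/
/-!
Suppose `I` is an uncountable family of pairwise disjoint nonempty open intervals. Distinct
intervals of `I` have distinct left and distinct right endpoints, so each one abuts at most two
others, and an uncountable subfamily has pairwise disjoint endpoint pairs. Listing it as an
`ω₁`-sequence of increasing pairs, 2-entangledness applied to the type `(<, >)` yields two
intervals `(a, b)`, `(a', b')` with `a < a'` and `b' ≤ b`, that is, one nested in the other,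
contradicting disjointness.
-/

noncomputable def omega1 : Ordinal.{0} := (Cardinal.aleph 1).ord

/-- A linear order has the countable chain condition if there is no uncountable
family of pairwise disjoint nonempty open intervals. -/
def CCC (L : Type*) [LinearOrder L] : Prop :=
  ¬ ∃ I : Set (L × L), ¬ I.Countable ∧
    (∀ p ∈ I, ∃ c, p.1 < c ∧ c < p.2) ∧
    (∀ p ∈ I, ∀ r ∈ I, p ≠ r →
      ¬ ∃ c, (p.1 < c ∧ c < p.2) ∧ (r.1 < c ∧ c < r.2))

/-- Separability: a countable set meeting every nonempty open interval. -/
def SeparableOrder (L : Type*) [LinearOrder L] : Prop :=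
  ∃ D : Set L, D.Countable ∧ ∀ a b : L, a < b → (∃ c, a < c ∧ c < b) →
    ∃ d ∈ D, a < d ∧ d < b

/-- The first `n` coordinates of `t` form an increasing tuple. -/
def IncreasingTuple {L : Type*} [LinearOrder L] (n : ℕ) (t : ℕ → L) : Prop :=
  ∀ i j : ℕ, i < j → j < n → t i < t j

/-- The `n`-tuples of the sequence `a` (indexed by ordinals `< ω₁`) are pairwise
disjoint: no coordinate of one tuple equals any coordinate of another. -/
def DisjointSeq {L : Type*} [LinearOrder L] (n : ℕ) (a : Ordinal → ℕ → L) : Prop :=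
  ∀ ξ, ξ < omega1 → ∀ δ, δ < omega1 → ξ ≠ δ →
    ∀ i, i < n → ∀ j, j < n → a ξ i ≠ a δ j

/-- The sequence of `n`-tuples `a` realizes the type `g`. -/
def RealizesType {L : Type*} [LinearOrder L] (n : ℕ) (a : Ordinal → ℕ → L)
    (g : ℕ → Bool) : Prop :=
  ∃ ξ, ξ < omega1 ∧ ∃ δ, δ < omega1 ∧ ∀ i, i < n → (a ξ i < a δ i ↔ g i = true)

/-- `L` is `n`-entangled. -/
def Entangled (L : Type*) [LinearOrder L] (n : ℕ) : Prop :=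
  ∀ a : Ordinal → ℕ → L, (∀ ξ, ξ < omega1 → IncreasingTuple n (a ξ)) →
    DisjointSeq n a → ∀ g : ℕ → Bool, RealizesType n a g

/-- The sequence of increasing `n`-tuples is separated: there are
`c 0, …, c (n-2)` with `a ξ i < c i < a ξ (i+1)` for all `ξ < ω₁`. -/
def SeparatedSeq {L : Type*} [LinearOrder L] (n : ℕ) (a : Ordinal → ℕ → L) : Prop :=
  ∃ c : ℕ → L, ∀ ξ, ξ < omega1 → ∀ i, i + 1 < n →
    a ξ i < c i ∧ c i < a ξ (i + 1)

/-- `L` is weakly `n`-entangled. -/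
def WeaklyEntangled (L : Type*) [LinearOrder L] (n : ℕ) : Prop :=
  ∀ a : Ordinal → ℕ → L, (∀ ξ, ξ < omega1 → IncreasingTuple n (a ξ)) →
    DisjointSeq n a → SeparatedSeq n a → ∀ g : ℕ → Bool, RealizesType n a g

universe u

open Set Cardinal

theorem Set.exists_not_countable_pairwise_not {α : Type*} {S : Set α} (hS : ¬S.Countable)
    (R : α → α → Prop) (hR : ∀ x ∈ S, {y ∈ S | R x y ∨ R y x}.Countable) :
    ∃ T ⊆ S, ¬T.Countable ∧ T.Pairwise fun x y => ¬R x y := by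
  obtain ⟨T, hT⟩ := zorn_subset {T | T ⊆ S ∧ T.Pairwise fun x y => ¬R x y}
    fun c hcS hc => ⟨⋃₀ c, ⟨sUnion_subset fun s hs => (hcS hs).1,
      hc.pairwise_sUnion.2 fun s hs => (hcS hs).2⟩, fun _ => subset_sUnion_of_mem⟩
  refine ⟨T, hT.prop.1, fun hTc => hS ?_, hT.prop.2⟩
  -- by maximality, every point of `S` outside `T` is `R`-related to a point of `T`
  have hcover : S ⊆ T ∪ ⋃ t ∈ T, {y ∈ S | R t y ∨ R y t} := by
    intro s hs
    by_cases hsT : s ∈ T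
    · exact Or.inl hsT
    have hins : ¬(insert s T).Pairwise fun x y => ¬R x y := fun hp =>
      hsT (hT.mem_of_prop_insert ⟨insert_subset hs hT.prop.1, hp⟩)
    simp only [pairwise_insert, hT.prop.2, true_and, not_forall, not_and_or, not_not] at hins
    obtain ⟨t, ht, -, hst⟩ := hins
    exact Or.inr (mem_biUnion ht ⟨hs, hst.symm⟩)
  exact (hTc.union (hTc.biUnion fun t ht => hR t (hT.prop.1 ht))).mono hcover

theorem exists_injOn_Iio_omega1 {α : Type u} {S : Set α} (hS : ¬S.Countable) :
    ∃ f : Ordinal → α, InjOn f (Iio omega1) ∧ MapsTo f (Iio omega1) S := by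
  have hS₁ : ℵ₁ ≤ #S := aleph_one_le_iff.2 (not_le.1 (mt le_aleph0_iff_set_countable.1 hS))
  have hcard : lift.{u} #(Iio omega1) ≤ lift.{1} #S := by simpa [omega1] using hS₁
  obtain ⟨e⟩ := lift_mk_le'.mp hcard
  obtain ⟨s₀, -⟩ : S.Nonempty := nonempty_iff_ne_empty.2 (by rintro rfl; exact hS countable_empty)
  classical
  refine ⟨fun ξ => if h : ξ < omega1 then e ⟨ξ, h⟩ else s₀, fun ξ hξ δ hδ hfe => ?_,
    fun ξ hξ => ?_⟩
  · simp only [dif_pos (show ξ < omega1 from hξ), dif_pos (show δ < omega1 from hδ)] at hfe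
    exact congrArg Subtype.val (e.injective (Subtype.ext hfe))
  · simp only [dif_pos (show ξ < omega1 from hξ)]
    exact (e _).2

section Intervals

variable {L : Type*} [LinearOrder L]

theorem ccc_iff : CCC L ↔ ∀ I : Set (L × L), (∀ p ∈ I, (Ioo p.1 p.2).Nonempty) →
    I.PairwiseDisjoint (fun p => Ioo p.1 p.2) → I.Countable :=
  ⟨fun h I hne hdisj => by_contra fun hI => h ⟨I, hI, hne,
      fun _ hp _ hr hpr ⟨_, hcp, hcr⟩ => disjoint_left.1 (hdisj hp hr hpr) hcp hcr⟩,
    fun h ⟨I, hI, hne, hdisj⟩ => hI <| h I hne fun p hp r hr hpr =>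
      disjoint_left.2 fun c hcp hcr => hdisj p hp r hr hpr ⟨c, hcp, hcr⟩⟩

theorem not_disjoint_Ioo_of_le_of_le {a b c d : L} (hac : a ≤ c) (hdb : d ≤ b)
    (hcd : (Ioo c d).Nonempty) : ¬Disjoint (Ioo a b) (Ioo c d) := fun h =>
  hcd.ne_empty (disjoint_self.1 (h.mono_left (Ioo_subset_Ioo hac hdb)))

theorem ne_and_ne_of_disjoint_Ioo {a b c d : L} (hab : (Ioo a b).Nonempty)
    (hcd : (Ioo c d).Nonempty) (h : Disjoint (Ioo a b) (Ioo c d)) : a ≠ c ∧ b ≠ d := by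
  constructor
  · rintro rfl
    rcases le_total b d with hbd | hdb
    · exact not_disjoint_Ioo_of_le_of_le le_rfl hbd hab h.symm
    · exact not_disjoint_Ioo_of_le_of_le le_rfl hdb hcd h
  · rintro rfl
    rcases le_total a c with hac | hca
    · exact not_disjoint_Ioo_of_le_of_le hac le_rfl hcd h
    · exact not_disjoint_Ioo_of_le_of_le hca le_rfl hab h.symm

end Intervals

theorem Entangled.exists_of_not_countable {L : Type*} [LinearOrder L] (h : Entangled L 2)
    {S : Set (L × L)} (hS : ¬S.Countable) (hlt : ∀ p ∈ S, p.1 < p.2)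
    (hsep : S.Pairwise fun p r => p.1 ≠ r.1 ∧ p.1 ≠ r.2 ∧ p.2 ≠ r.2) (g₀ g₁ : Bool) :
    ∃ p ∈ S, ∃ r ∈ S, (p.1 < r.1 ↔ g₀ = true) ∧ (p.2 < r.2 ↔ g₁ = true) := by
  obtain ⟨f, hinj, hmaps⟩ := exists_injOn_Iio_omega1 hS
  let a : Ordinal → ℕ → L := fun ξ i => if i = 0 then (f ξ).1 else (f ξ).2
  have hinc : ∀ ξ, ξ < omega1 → IncreasingTuple 2 (a ξ) := by
    intro ξ hξ i j hij hj
    obtain rfl : i = 0 := by omega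
    obtain rfl : j = 1 := by omega
    exact hlt _ (hmaps hξ)
  have hdisj : DisjointSeq 2 a := by
    intro ξ hξ δ hδ hne i hi j hj
    obtain ⟨h₁₁, h₁₂, h₂₂⟩ := hsep (hmaps hξ) (hmaps hδ) (hinj.ne hξ hδ hne)
    have h₂₁ := (hsep (hmaps hδ) (hmaps hξ) (hinj.ne hδ hξ hne.symm)).2.1.symm
    interval_cases i <;> interval_cases j <;> simpa [a]
  obtain ⟨ξ, hξ, δ, hδ, hg⟩ := h a hinc hdisj fun i => if i = 0 then g₀ else g₁
  exact ⟨f ξ, hmaps hξ, f δ, hmaps hδ, hg 0 two_pos, hg 1 one_lt_two⟩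

theorem stmt0_general (L : Type*) [LinearOrder L]
    (h : Entangled L 2) : CCC L := by
  refine ccc_iff.2 fun I hne hdisj => by_contra fun hI => ?_
  have hends : I.Pairwise fun p r => p.1 ≠ r.1 ∧ p.2 ≠ r.2 := fun p hp r hr hpr =>
    ne_and_ne_of_disjoint_Ioo (hne p hp) (hne r hr) (hdisj hp hr hpr)
  have hfst : ∀ x, {r ∈ I | r.1 = x}.Subsingleton := fun _ r ⟨hr, hrx⟩ s ⟨hs, hsx⟩ =>
    by_contra fun hrs => (hends hr hs hrs).1 (hrx.trans hsx.symm)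
  have hsnd : ∀ x, {r ∈ I | r.2 = x}.Subsingleton := fun _ r ⟨hr, hrx⟩ s ⟨hs, hsx⟩ =>
    by_contra fun hrs => (hends hr hs hrs).2 (hrx.trans hsx.symm)
  have hadj : ∀ p ∈ I, {r ∈ I | p.1 = r.2 ∨ r.1 = p.2}.Countable := fun p _ =>
    ((hsnd p.1).countable.union (hfst p.2).countable).mono fun r ⟨hr, hpr⟩ =>
      hpr.elim (fun e => Or.inl ⟨hr, e.symm⟩) fun e => Or.inr ⟨hr, e⟩
  obtain ⟨S, hSI, hS, hSsep⟩ := exists_not_countable_pairwise_not hI (fun p r => p.1 = r.2) hadj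
  obtain ⟨p, hp, r, hr, h₁, h₂⟩ := h.exists_of_not_countable hS
    (fun p hp => (hne p (hSI hp)).elim fun _ hc => hc.1.trans hc.2)
    (fun p hp r hr hpr => ⟨(hends (hSI hp) (hSI hr) hpr).1, hSsep hp hr hpr,
      (hends (hSI hp) (hSI hr) hpr).2⟩) true false
  have hpr : p ≠ r := fun e => (h₁.2 rfl).ne (congrArg Prod.fst e)
  exact not_disjoint_Ioo_of_le_of_le (h₁.2 rfl).le (not_lt.1 (mt h₂.1 Bool.false_ne_true))
    (hne r (hSI hr)) (hdisj (hSI hp) (hSI hr) hpr)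

/-- a 2-entangled uncountable linear order is c.c.c. -/
theorem stmt0 (L : Type*) [LinearOrder L] [Uncountable L]
    (h : Entangled L 2) : CCC L :=
  stmt0_general L h
end

section
/- If L is a 3-entangled uncountable linear order, then L is separable: there is a countable set D ⊆ L such that whenever a <_L b and some element lies strictly between a and b, some element of D lies strictly between a and b. -/
/-!
If `L` is not separable, every countable `D ⊆ L` misses some interval `[x₀, x₂]` containing a
third point `x₁`. Transfinite recursion then gives triples `x^β₀ < x^β₁ < x^β₂` (`β < ω₁`) such
that `[x^β₀, x^β₂]` contains no point of an earlier triple. Entangledness applied to the type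
"down, up, down" yields `ξ ≠ δ` with `x^δ₀ ≤ x^ξ₀ < x^ξ₁ < x^δ₁ < x^δ₂ ≤ x^ξ₂`, so each of the
two intervals contains the middle point of the other triple, which is impossible whichever of
`ξ`, `δ` comes first.
-/

open Set

theorem countable_Iio_of_lt_omega1 {β : Ordinal} (hβ : β < omega1) : (Iio β).Countable := by
  rw [← Cardinal.le_aleph0_iff_set_countable, Cardinal.mk_Iio_ordinal, Cardinal.lift_le_aleph0,
    ← Cardinal.lt_aleph_one_iff]
  exact Cardinal.lt_ord.1 hβ

theorem exists_seq_omega1 {X : Type*} (P : Set X → X → Prop)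
    (hP : ∀ T : Set X, T.Countable → ∃ x, P T x) :
    ∃ F : Ordinal → X, ∀ β < omega1, P (F '' Iio β) (F β) := by
  have : Nonempty X := ⟨(hP ∅ countable_empty).choose⟩
  let F : Ordinal → X :=
    Ordinal.lt_wf.fix fun β rec => Classical.epsilon (P {x | ∃ α h, rec α h = x})
  have hF : ∀ β, F β = Classical.epsilon (P (F '' Iio β)) := by
    intro β
    rw [show F β = _ from Ordinal.lt_wf.fix_eq _ β]
    congr
    ext x
    simp [F]
  exact ⟨F, fun β hβ => (hF β).symm ▸
    Classical.epsilon_spec (hP _ ((countable_Iio_of_lt_omega1 hβ).image F))⟩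

section FreshTriple

variable {L : Type*} [LinearOrder L]

def FreshTriple (D : Set L) (t : ℕ → L) : Prop :=
  t 0 < t 1 ∧ t 1 < t 2 ∧ Disjoint (Icc (t 0) (t 2)) D

theorem FreshTriple.increasingTuple {D : Set L} {t : ℕ → L} (ht : FreshTriple D t) :
    IncreasingTuple 3 t := by
  obtain ⟨h01, h12, -⟩ := ht
  intro i j hij hj
  interval_cases j <;> interval_cases i
  exacts [h01, h01.trans h12, h12]

theorem exists_Ioo_disjoint_of_not_separableOrder (hns : ¬ SeparableOrder L) {E : Set L}
    (hE : E.Countable) : ∃ a b c : L, c ∈ Ioo a b ∧ Disjoint (Ioo a b) E := by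
  by_contra! hcon
  refine hns ⟨E, hE, fun a b _ ⟨c, hc⟩ => ?_⟩
  obtain ⟨d, hd, hdE⟩ := not_disjoint_iff.1 (hcon a b c hc)
  exact ⟨d, hdE, hd⟩

theorem countable_covBy_neighbors {D : Set L} (hD : D.Countable) :
    {x | ∃ d ∈ D, d ⋖ x ∨ x ⋖ d}.Countable := by
  have h : {x | ∃ d ∈ D, d ⋖ x ∨ x ⋖ d} = ⋃ d ∈ D, ({x | d ⋖ x} ∪ {x | x ⋖ d}) := by
    ext x
    simp
  rw [h]
  exact hD.biUnion fun d _ =>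
    (Subsingleton.countable fun _ hx _ hy => hx.unique_right hy).union
      (Subsingleton.countable fun _ hx _ hy => hx.unique_left hy)

theorem exists_notMem_Ico_of_not_covBy {D : Set L} {a c : L} (hac : a < c)
    (hc : ∀ d ∈ D, ¬ d ⋖ c) (hD : Disjoint (Ioo a c) D) : ∃ x ∈ Ico a c, x ∉ D := by
  by_cases ha : a ∈ D
  · obtain ⟨x, hx⟩ := (not_covBy_iff_exists_mem_Ioo hac).1 (hc a ha)
    exact ⟨x, Ioo_subset_Ico_self hx, hD.notMem_of_mem_left hx⟩
  · exact ⟨a, ⟨le_rfl, hac⟩, ha⟩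

theorem exists_notMem_Ioc_of_not_covBy {D : Set L} {c b : L} (hcb : c < b)
    (hc : ∀ d ∈ D, ¬ c ⋖ d) (hD : Disjoint (Ioo c b) D) : ∃ x ∈ Ioc c b, x ∉ D := by
  by_cases hb : b ∈ D
  · obtain ⟨x, hx⟩ := (not_covBy_iff_exists_mem_Ioo hcb).1 (hc b hb)
    exact ⟨x, Ioo_subset_Ioc_self hx, hD.notMem_of_mem_left hx⟩
  · exact ⟨b, ⟨hcb, le_rfl⟩, hb⟩

/-- Removing the immediate neighbors of `D` as well makes sure that the endpoints of the
interval avoiding them can be moved inwards off `D`. -/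
theorem exists_freshTriple (hns : ¬ SeparableOrder L) {D : Set L} (hD : D.Countable) :
    ∃ t, FreshTriple D t := by
  obtain ⟨a, b, c, ⟨hac, hcb⟩, hab⟩ :=
    exists_Ioo_disjoint_of_not_separableOrder hns (hD.union (countable_covBy_neighbors hD))
  have hc : c ∉ {x | ∃ d ∈ D, d ⋖ x ∨ x ⋖ d} := fun h =>
    hab.notMem_of_mem_left ⟨hac, hcb⟩ (Or.inr h)
  have hDab : Disjoint (Ioo a b) D := hab.mono_right subset_union_left
  obtain ⟨x₀, ⟨hax₀, hx₀c⟩, hx₀⟩ := exists_notMem_Ico_of_not_covBy hac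
    (fun d hd h => hc ⟨d, hd, Or.inl h⟩) (hDab.mono_left (Ioo_subset_Ioo_right hcb.le))
  obtain ⟨x₂, ⟨hcx₂, hx₂b⟩, hx₂⟩ := exists_notMem_Ioc_of_not_covBy hcb
    (fun d hd h => hc ⟨d, hd, Or.inr h⟩) (hDab.mono_left (Ioo_subset_Ioo_left hac.le))
  refine ⟨fun i => if i = 0 then x₀ else if i = 1 then c else x₂, hx₀c, hcx₂, ?_⟩
  refine disjoint_left.2 fun x ⟨hx₀x, hxx₂⟩ hxD => ?_
  rcases hx₀x.eq_or_lt with rfl | hx₀x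
  · exact hx₀ hxD
  rcases hxx₂.eq_or_lt with rfl | hxx₂
  · exact hx₂ hxD
  exact hDab.notMem_of_mem_left ⟨hax₀.trans_lt hx₀x, hxx₂.trans_le hx₂b⟩ hxD

def IsFreshSeq (F : Ordinal → ℕ → L) : Prop :=
  ∀ β < omega1, FreshTriple (⋃ t ∈ F '' Iio β, range t) (F β)

namespace IsFreshSeq

variable {F : Ordinal → ℕ → L}

theorem notMem_Icc (hF : IsFreshSeq F) {α β : Ordinal} (hβ : β < omega1) (hαβ : α < β)
    (i : ℕ) : F α i ∉ Icc (F β 0) (F β 2) := fun hmem =>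
  (hF β hβ).2.2.notMem_of_mem_left hmem (mem_biUnion (mem_image_of_mem F hαβ) (mem_range_self i))

theorem disjointSeq (hF : IsFreshSeq F) : DisjointSeq 3 F := by
  have hmem : ∀ β < omega1, ∀ j < 3, F β j ∈ Icc (F β 0) (F β 2) := fun β hβ j hj => by
    obtain ⟨h01, h12, -⟩ := hF β hβ
    interval_cases j
    exacts [⟨le_rfl, (h01.trans h12).le⟩, ⟨h01.le, h12.le⟩, ⟨(h01.trans h12).le, le_rfl⟩]
  intro ξ hξ δ hδ hξδ i _ j hj hij
  rcases hξδ.lt_or_gt with h | h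
  · exact hF.notMem_Icc hδ h i (hij ▸ hmem δ hδ j hj)
  · exact hF.notMem_Icc hξ h j (hij.symm ▸ hmem ξ hξ i ‹_›)

theorem not_realizesType (hF : IsFreshSeq F) : ¬ RealizesType 3 F (fun i => decide (i = 1)) := by
  rintro ⟨ξ, hξ, δ, hδ, hreal⟩
  have h0 : F δ 0 ≤ F ξ 0 := not_lt.1 fun h => by simpa using (hreal 0 (by norm_num)).1 h
  have h1 : F ξ 1 < F δ 1 := (hreal 1 (by norm_num)).2 rfl
  have h2 : F δ 2 ≤ F ξ 2 := not_lt.1 fun h => by simpa using (hreal 2 (by norm_num)).1 h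
  obtain ⟨hξ01, hξ12, -⟩ := hF ξ hξ
  obtain ⟨hδ01, hδ12, -⟩ := hF δ hδ
  rcases (ne_of_apply_ne (F · 1) h1.ne).lt_or_gt with h | h
  · exact hF.notMem_Icc hδ h 1 ⟨(h0.trans_lt hξ01).le, (h1.trans hδ12).le⟩
  · exact hF.notMem_Icc hξ h 1 ⟨(hξ01.trans h1).le, hδ12.le.trans h2⟩

end IsFreshSeq

end FreshTriple

theorem stmt1_general (L : Type*) [LinearOrder L]
    (h : Entangled L 3) : SeparableOrder L := by
  by_contra hns
  obtain ⟨F, hF : IsFreshSeq F⟩ := exists_seq_omega1 (fun T t => FreshTriple (⋃ s ∈ T, range s) t)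
    fun T hT => exists_freshTriple hns (hT.biUnion fun s _ => countable_range s)
  exact hF.not_realizesType (h F (fun ξ hξ => (hF ξ hξ).increasingTuple) hF.disjointSeq _)

/-- a 3-entangled uncountable linear order is separable. -/
theorem stmt1 (L : Type*) [LinearOrder L] [Uncountable L]
    (h : Entangled L 3) : SeparableOrder L :=
  stmt1_general L h
end

section
/- If L is a dense weakly 2-entangled linear order, then the lexicographic product M = L × 2 is weakly 2-entangled but not 2-entangled. -/
/-!
A separated sequence of pairs in `L ×ₗ Fin 2` projects to a sequence of pairs in `L` separated
by the first coordinate of the separator, except for at most one index per coordinate, which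
lands on the separator's level. Thinning out to an uncountable subsequence on which the
`Fin 2`-coordinates are constant makes the projection disjoint and order-preserving on each
coordinate, so weak entanglement of `L` transfers. On the other hand the pairs `((x, 0), (x, 1))`
for an injective `ω₁`-sequence `x` in `L` move both coordinates together, so they realize no type
`g` with `g 0 ≠ g 1`.
-/

open Cardinal Set

lemma omega1_pos : 0 < omega1 := by
  rw [omega1, ord_aleph]
  exact Ordinal.omega_pos 1

lemma mk_Iio_omega1 : #(Iio omega1) = lift.{1} (ℵ₁ : Cardinal.{0}) := by
  rw [omega1, mk_Iio_ordinal, card_ord]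

lemma not_countable_Iio_omega1 : ¬ (Iio omega1).Countable := by
  rw [← le_aleph0_iff_set_countable, mk_Iio_omega1, ← lift_aleph0.{1, 0}, lift_le, not_le]
  exact aleph0_lt_aleph_one

lemma exists_mapsTo_injOn_omega1 {α : Type*} {s : Set α} (hs : ¬ s.Countable) :
    ∃ f : Ordinal → α, MapsTo f (Iio omega1) s ∧ InjOn f (Iio omega1) := by
  obtain ⟨e⟩ : Nonempty (Iio omega1 ↪ s) := by
    rw [← lift_mk_le', mk_Iio_omega1, lift_lift]
    have : ℵ₁ ≤ #s := aleph_one_le_iff.2 (not_le.1 (mt le_aleph0_iff_set_countable.1 hs))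
    simpa using lift_le.{1}.2 this
  classical
  refine ⟨fun ξ => if h : ξ < omega1 then e ⟨ξ, h⟩ else e ⟨0, omega1_pos⟩, fun ξ hξ => ?_,
    fun ξ hξ δ hδ h => ?_⟩
  · simp only [dif_pos (mem_Iio.mp hξ), Subtype.coe_prop]
  · simp only [dif_pos (mem_Iio.mp hξ), dif_pos (mem_Iio.mp hδ)] at h
    exact congrArg Subtype.val (e.injective (Subtype.ext h))

lemma exists_not_countable_inter_preimage_singleton {α β : Type*} [Countable β] {s : Set α}
    (hs : ¬ s.Countable) (f : α → β) : ∃ b, ¬ (s ∩ f ⁻¹' {b}).Countable := by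
  by_contra! h
  refine hs ((countable_iUnion h).mono fun x hx => ?_)
  exact mem_iUnion.2 ⟨f x, hx, rfl⟩

section Sequences

variable {L L' : Type*} [LinearOrder L] [LinearOrder L']

lemma increasingTuple_two_iff {t : ℕ → L} : IncreasingTuple 2 t ↔ t 0 < t 1 := by
  refine ⟨fun h => h 0 1 one_pos one_lt_two, fun h i j hij hj => ?_⟩
  obtain ⟨rfl, rfl⟩ : i = 0 ∧ j = 1 := by omega
  exact h

lemma separatedSeq_two_iff {a : Ordinal → ℕ → L} :
    SeparatedSeq 2 a ↔ ∃ c, ∀ ξ < omega1, a ξ 0 < c ∧ c < a ξ 1 := by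
  refine ⟨fun ⟨c, hc⟩ => ⟨c 0, fun ξ hξ => hc ξ hξ 0 one_lt_two⟩, fun ⟨c, hc⟩ => ?_⟩
  refine ⟨fun _ => c, fun ξ hξ i hi => ?_⟩
  obtain rfl : i = 0 := by omega
  exact hc ξ hξ

lemma DisjointSeq.subsingleton {n : ℕ} {a : Ordinal → ℕ → L} (hd : DisjointSeq n a) {i : ℕ}
    (hi : i < n) (x : L) : {ξ | ξ < omega1 ∧ a ξ i = x}.Subsingleton := by
  rintro ξ ⟨hξ, rfl⟩ δ ⟨hδ, hδx⟩
  by_contra hne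
  exact hd ξ hξ δ hδ hne i hi i hi hδx.symm

lemma disjointSeq_two_of_separated {a : Ordinal → ℕ → L} {c : L}
    (hc : ∀ ξ < omega1, a ξ 0 < c ∧ c < a ξ 1)
    (hd : ∀ ξ < omega1, ∀ δ < omega1, ξ ≠ δ → ∀ i < 2, a ξ i ≠ a δ i) : DisjointSeq 2 a := by
  intro ξ hξ δ hδ hne i hi j hj
  interval_cases i <;> interval_cases j
  · exact hd ξ hξ δ hδ hne 0 two_pos
  · exact ((hc ξ hξ).1.trans (hc δ hδ).2).ne
  · exact ((hc δ hδ).1.trans (hc ξ hξ).2).ne'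
  · exact hd ξ hξ δ hδ hne 1 one_lt_two

lemma RealizesType.of_reindex {n : ℕ} {a : Ordinal → ℕ → L} {b : Ordinal → ℕ → L'}
    {φ : Ordinal → Ordinal} {g : ℕ → Bool} (hφ : MapsTo φ (Iio omega1) (Iio omega1))
    (hab : ∀ ξ < omega1, ∀ δ < omega1, ∀ i < n, (a (φ ξ) i < a (φ δ) i ↔ b ξ i < b δ i))
    (hb : RealizesType n b g) : RealizesType n a g := by
  obtain ⟨ξ, hξ, δ, hδ, h⟩ := hb
  exact ⟨φ ξ, hφ hξ, φ δ, hφ hδ, fun i hi => (hab ξ hξ δ hδ i hi).trans (h i hi)⟩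

end Sequences

namespace Prod.Lex

lemma lt_iff_of_snd_eq {α β : Type*} [LT α] [Preorder β] {x y : α ×ₗ β}
    (h : (ofLex x).2 = (ofLex y).2) : x < y ↔ (ofLex x).1 < (ofLex y).1 := by
  simp [lt_iff, h]

lemma fst_lt_or_of_lt_of_fin_two {α : Type*} [LT α] {x y : α ×ₗ Fin 2} (h : x < y) :
    (ofLex x).1 < (ofLex y).1 ∨ x = toLex ((ofLex y).1, 0) ∧ y = toLex ((ofLex x).1, 1) := by
  rcases lt_iff.mp h with h | ⟨h1, h2⟩
  · exact Or.inl h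
  · obtain ⟨hx, hy⟩ : (ofLex x).2 = 0 ∧ (ofLex y).2 = 1 := by omega
    exact Or.inr ⟨ofLex.injective (Prod.ext h1 hx), ofLex.injective (Prod.ext h1.symm hy)⟩

end Prod.Lex

section LexFinTwo

variable {L : Type*} [LinearOrder L]

lemma not_countable_setOf_fst_lt_lt {a : Ordinal → ℕ → L ×ₗ Fin 2} (hd : DisjointSeq 2 a)
    {c : L ×ₗ Fin 2} (hc : ∀ ξ < omega1, a ξ 0 < c ∧ c < a ξ 1) :
    ¬ {ξ | ξ < omega1 ∧ (ofLex (a ξ 0)).1 < (ofLex c).1 ∧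
      (ofLex c).1 < (ofLex (a ξ 1)).1}.Countable := by
  intro hS
  refine not_countable_Iio_omega1 (((hS.union (hd.subsingleton two_pos
    (toLex ((ofLex c).1, 0))).countable).union (hd.subsingleton one_lt_two
    (toLex ((ofLex c).1, 1))).countable).mono fun ξ hξ => ?_)
  rcases Prod.Lex.fst_lt_or_of_lt_of_fin_two (hc ξ hξ).1 with h0 | ⟨h0, -⟩
  · rcases Prod.Lex.fst_lt_or_of_lt_of_fin_two (hc ξ hξ).2 with h1 | ⟨-, h1⟩
    · exact Or.inl (Or.inl ⟨hξ, h0, h1⟩)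
    · exact Or.inr ⟨hξ, h1⟩
  · exact Or.inl (Or.inr ⟨hξ, h0⟩)

theorem WeaklyEntangled.lex_fin_two (h : WeaklyEntangled L 2) :
    WeaklyEntangled (L ×ₗ Fin 2) 2 := by
  intro a _ hdisj hsep g
  obtain ⟨c, hc⟩ := separatedSeq_two_iff.1 hsep
  obtain ⟨k, hk⟩ := exists_not_countable_inter_preimage_singleton
    (not_countable_setOf_fst_lt_lt hdisj hc) fun ξ => ((ofLex (a ξ 0)).2, (ofLex (a ξ 1)).2)
  obtain ⟨φ, hφ, hφinj⟩ := exists_mapsTo_injOn_omega1 hk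
  set b : Ordinal → ℕ → L := fun ξ i => (ofLex (a (φ ξ) i)).1
  have hφω : ∀ ξ < omega1, φ ξ < omega1 := fun ξ hξ => (hφ hξ).1.1
  have hbsep : ∀ ξ < omega1, b ξ 0 < (ofLex c).1 ∧ (ofLex c).1 < b ξ 1 :=
    fun ξ hξ => (hφ hξ).1.2
  have hsnd : ∀ ξ < omega1, ∀ δ < omega1, ∀ i < 2,
      (ofLex (a (φ ξ) i)).2 = (ofLex (a (φ δ) i)).2 := by
    intro ξ hξ δ hδ i hi
    have hfiber := Prod.ext_iff.1 ((hφ hξ).2.trans (hφ hδ).2.symm)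
    interval_cases i
    exacts [hfiber.1, hfiber.2]
  have hbdisj : DisjointSeq 2 b := disjointSeq_two_of_separated hbsep
    fun ξ hξ δ hδ hne i hi heq => hdisj _ (hφω ξ hξ) _ (hφω δ hδ) (hφinj.ne hξ hδ hne) i hi i hi
      (ofLex.injective (Prod.ext heq (hsnd ξ hξ δ hδ i hi)))
  have hbinc : ∀ ξ < omega1, IncreasingTuple 2 (b ξ) :=
    fun ξ hξ => increasingTuple_two_iff.2 ((hbsep ξ hξ).1.trans (hbsep ξ hξ).2)
  refine (h b hbinc hbdisj (separatedSeq_two_iff.2 ⟨_, hbsep⟩) g).of_reindex hφω ?_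
  exact fun ξ hξ δ hδ i hi => Prod.Lex.lt_iff_of_snd_eq (hsnd ξ hξ δ hδ i hi)

theorem not_entangled_lex_fin_two [Uncountable L] : ¬ Entangled (L ×ₗ Fin 2) 2 := by
  obtain ⟨x, -, hx⟩ := exists_mapsTo_injOn_omega1 (s := (univ : Set L)) not_countable_univ
  set a : Ordinal → ℕ → L ×ₗ Fin 2 := fun ξ i => toLex (x ξ, Fin.ofNat 2 i)
  have hainc : ∀ ξ < omega1, IncreasingTuple 2 (a ξ) :=
    fun ξ _ => increasingTuple_two_iff.2 (Prod.Lex.toLex_lt_toLex.2 (Or.inr ⟨rfl, by simp⟩))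
  have hadisj : DisjointSeq 2 a := fun ξ hξ δ hδ hne i _ j _ heq =>
    hx.ne hξ hδ hne (congrArg (fun z => (ofLex z).1) heq)
  intro hent
  obtain ⟨ξ, -, δ, -, hg⟩ := hent a hainc hadisj fun i => decide (i = 0)
  have hlt : ∀ i, a ξ i < a δ i ↔ x ξ < x δ := fun i => Prod.Lex.lt_iff_of_snd_eq rfl
  have h0 := hg 0 two_pos
  have h1 := hg 1 one_lt_two
  simp only [hlt, decide_eq_true_eq] at h0 h1
  exact one_ne_zero (h1.1 (h0.2 trivial))

end LexFinTwo

theorem stmt5_general (L : Type*) [LinearOrder L] [Uncountable L]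
    (h : WeaklyEntangled L 2) :
    WeaklyEntangled (Lex (L × Fin 2)) 2 ∧ ¬ Entangled (Lex (L × Fin 2)) 2 :=
  ⟨h.lex_fin_two, not_entangled_lex_fin_two⟩

/-- if `L` is a dense weakly 2-entangled (uncountable) linear order, then
the lexicographic product `M = L × 2` is weakly 2-entangled but not 2-entangled. -/
theorem stmt5 (L : Type*) [LinearOrder L] [Uncountable L] [DenselyOrdered L]
    (h : WeaklyEntangled L 2) :
    WeaklyEntangled (Lex (L × Fin 2)) 2 ∧ ¬ Entangled (Lex (L × Fin 2)) 2 :=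
  stmt5_general L h
end
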